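/- Uniqueness of the population clustering solution at K = Q_fam (Section 3.1). Let β̂_1,…,β̂_J be sequences of ℝ^P-valued random vectors on a common probability space (for each n) with β̂_j →p β_j, and let S₀ be the partition of {1,…,J} into the Q_fam level sets of j ↦ β_j (the true group structure, where the distinct limit values are pairwise different). For a partition S = {S_1,…,S_K} of {1,…,J}, define the within-cluster sum of squares g_n(S) = Σ_{k=1}^{K} Σ_{j ∈ S_k} ‖β̂_j − S̄_k‖², where S̄_k is the arithmetic mean of the β̂_j with j ∈ S_k. Then: (i) g_n(S₀) →p 0; (ii) for every partition S into Q_fam cells with S ≠ S₀, g_n(S) converges in probability to a strictly positive constant; and consequently (iii) lim_{n→∞} P( g_n(S₀) < g_n(S) for every Q_fam-cell partition S ≠ S₀ ) = 1, so that asymptotically the true partition is the unique minimizer of the clustering objective among partitions into Q_fam cells. -/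

import Mathlib

open MeasureTheory Filter Finset

noncomputable section

/-- Squared Euclidean distance between two vectors of `ℝ^P`. -/
def sqDist {P : ℕ} (x y : Fin P → ℝ) : ℝ := ∑ i, (x i - y i) ^ 2

/-- Convergence in probability (in Euclidean distance) of `ℝ^P`-valued random vectors,
defined on a sequence of probability spaces, to a constant vector. -/
def TendstoInProb {Ω : ℕ → Type*} [∀ n, MeasurableSpace (Ω n)]
    (μ : ∀ n, Measure (Ω n)) {P : ℕ} (X : ∀ n, Ω n → Fin P → ℝ) (q : Fin P → ℝ) : Prop :=
  ∀ ε : ℝ, 0 < ε →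
    Tendsto (fun n => μ n {ω | ε < Real.sqrt (sqDist (X n ω) q)}) atTop (nhds 0)

/-- Convergence in probability of real-valued random variables to a constant. -/
def TendstoInProbR {Ω : ℕ → Type*} [∀ n, MeasurableSpace (Ω n)]
    (μ : ∀ n, Measure (Ω n)) (X : ∀ n, Ω n → ℝ) (c : ℝ) : Prop :=
  ∀ ε : ℝ, 0 < ε →
    Tendsto (fun n => μ n {ω | ε < |X n ω - c|}) atTop (nhds 0)

/-- The arithmetic mean of the points `x j`, `j ∈ A`. -/
def clMean {ι : Type*} {P : ℕ} (x : ι → Fin P → ℝ) (A : Finset ι) : Fin P → ℝ :=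
  (A.card : ℝ)⁻¹ • ∑ j ∈ A, x j

/-- A partition of `{1,…,J}`: a collection of nonempty sets such that every index belongs
to exactly one of them. -/
def IsPartition {J : ℕ} (𝒮 : Finset (Finset (Fin J))) : Prop :=
  (∀ A ∈ 𝒮, A.Nonempty) ∧ ∀ j : Fin J, ∃! A, A ∈ 𝒮 ∧ j ∈ A

/-- The within-cluster sum of squares `g(𝒮) = ∑_{cells A} ∑_{j ∈ A} ‖x j − mean_A‖²` of a
partition `𝒮`, evaluated at the points `x j ∈ ℝ^P`. -/
def withinSS {J P : ℕ} (𝒮 : Finset (Finset (Fin J))) (x : Fin J → Fin P → ℝ) : ℝ :=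
  ∑ A ∈ 𝒮, ∑ j ∈ A, sqDist (x j) (clMean x A)

/-!
The objective `withinSS 𝒮` is a continuous function of the points, so by the continuous
mapping theorem `g_n(𝒮)` converges in probability to its value at the limits `βⱼ`, which
is `0` for `S₀` since its cells are level sets. A partition with objective `0` has its
limits constant on every cell, so it refines `S₀`; with the same number `Q_fam` of cells it
must be `S₀`. Hence every other competitor has a strictly positive limit, and a finite union
bound over the competitors gives (iii).
-/

open Topology

section Probability

variable {Ω : ℕ → Type*} [∀ n, MeasurableSpace (Ω n)] {μ : ∀ n, Measure (Ω n)}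

lemma tendsto_measure_zero_of_subset {A B : ∀ n, Set (Ω n)}
    (hB : Tendsto (fun n => μ n (B n)) atTop (𝓝 0)) (hAB : ∀ n, A n ⊆ B n) :
    Tendsto (fun n => μ n (A n)) atTop (𝓝 0) :=
  tendsto_of_tendsto_of_tendsto_of_le_of_le tendsto_const_nhds hB (fun _ => zero_le)
    fun n => measure_mono (hAB n)

lemma tendsto_measure_union_zero {A B : ∀ n, Set (Ω n)}
    (hA : Tendsto (fun n => μ n (A n)) atTop (𝓝 0))
    (hB : Tendsto (fun n => μ n (B n)) atTop (𝓝 0)) :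
    Tendsto (fun n => μ n (A n ∪ B n)) atTop (𝓝 0) :=
  tendsto_of_tendsto_of_tendsto_of_le_of_le tendsto_const_nhds (by simpa using hA.add hB)
    (fun _ => zero_le) fun n => measure_union_le _ _

lemma tendsto_measure_biUnion_finset_zero {ι : Type*} (s : Finset ι) {A : ∀ n, ι → Set (Ω n)}
    (hA : ∀ i ∈ s, Tendsto (fun n => μ n (A n i)) atTop (𝓝 0)) :
    Tendsto (fun n => μ n (⋃ i ∈ s, A n i)) atTop (𝓝 0) :=
  tendsto_of_tendsto_of_tendsto_of_le_of_le tendsto_const_nhds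
    (by simpa using tendsto_finsetSum s hA) (fun _ => zero_le)
    fun n => measure_biUnion_finset_le s _

lemma tendsto_measure_one_of_compl [∀ n, IsProbabilityMeasure (μ n)] {A : ∀ n, Set (Ω n)}
    (hA : Tendsto (fun n => μ n (A n)ᶜ) atTop (𝓝 0)) :
    Tendsto (fun n => μ n (A n)) atTop (𝓝 1) := by
  have hlower : ∀ n, 1 - μ n (A n)ᶜ ≤ μ n (A n) := fun n => by
    rw [tsub_le_iff_right, ← measure_univ (μ := μ n), ← Set.union_compl_self (A n)]
    exact measure_union_le _ _
  refine tendsto_of_tendsto_of_tendsto_of_le_of_le ?_ tendsto_const_nhds hlower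
    fun _ => prob_le_one
  simpa using ENNReal.Tendsto.sub tendsto_const_nhds hA (Or.inr ENNReal.zero_ne_top)

lemma tendsto_measure_forall_finset_one [∀ n, IsProbabilityMeasure (μ n)] {ι : Type*}
    (s : Finset ι) {p : ∀ n, ι → Ω n → Prop}
    (hp : ∀ i ∈ s, Tendsto (fun n => μ n {ω | ¬ p n i ω}) atTop (𝓝 0)) :
    Tendsto (fun n => μ n {ω | ∀ i ∈ s, p n i ω}) atTop (𝓝 1) := by
  refine tendsto_measure_one_of_compl ?_
  convert tendsto_measure_biUnion_finset_zero s hp using 3 with n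
  ext ω
  simp

lemma TendstoInProbR.tendsto_measure_le {X Y : ∀ n, Ω n → ℝ} {a b : ℝ}
    (hX : TendstoInProbR μ X a) (hY : TendstoInProbR μ Y b) (hab : a < b) :
    Tendsto (fun n => μ n {ω | Y n ω ≤ X n ω}) atTop (𝓝 0) := by
  have hε : 0 < (b - a) / 3 := by linarith
  refine tendsto_measure_zero_of_subset (tendsto_measure_union_zero (hX _ hε) (hY _ hε))
    fun n ω (hle : Y n ω ≤ X n ω) => ?_
  by_contra hnot
  simp only [Set.mem_union, Set.mem_ofPred_eq, not_or, not_lt, abs_le] at hnot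
  linarith [hnot.1.2, hnot.2.1]

lemma dist_le_sqrt_sqDist {P : ℕ} (x y : Fin P → ℝ) : dist x y ≤ Real.sqrt (sqDist x y) :=
  (dist_pi_le_iff (Real.sqrt_nonneg _)).2 fun i => by
    rw [Real.dist_eq, ← Real.sqrt_sq_eq_abs]
    exact Real.sqrt_le_sqrt <|
      Finset.single_le_sum (f := fun i => (x i - y i) ^ 2) (fun i _ => sq_nonneg _) (mem_univ i)

/-- The continuous mapping theorem. -/
lemma tendstoInProbR_of_continuousAt {ι : Type*} [Fintype ι] {P : ℕ}
    {X : ∀ n, Ω n → ι → Fin P → ℝ} {x : ι → Fin P → ℝ}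
    (hX : ∀ i, TendstoInProb μ (fun n ω => X n ω i) (x i))
    {f : (ι → Fin P → ℝ) → ℝ} (hf : ContinuousAt f x) :
    TendstoInProbR μ (fun n ω => f (X n ω)) (f x) := by
  intro ε hε
  obtain ⟨δ, hδ, hball⟩ := Metric.continuousAt_iff.mp hf ε hε
  refine tendsto_measure_zero_of_subset
    (tendsto_measure_biUnion_finset_zero univ fun i _ => hX i (δ / 2) (half_pos hδ))
    fun n ω hfar => ?_
  by_contra hnear
  simp only [Set.mem_iUnion, Set.mem_ofPred_eq, mem_univ, exists_const, not_exists,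
    not_lt] at hnear
  have hclose : dist (X n ω) x < δ :=
    ((dist_pi_le_iff (half_pos hδ).le).2 fun i =>
      (dist_le_sqrt_sqDist _ _).trans (hnear i)).trans_lt (half_lt_self hδ)
  have := hball hclose
  rw [Real.dist_eq] at this
  exact hfar.not_gt this

end Probability

section Clustering

variable {J P : ℕ}

lemma sqDist_nonneg (x y : Fin P → ℝ) : 0 ≤ sqDist x y :=
  sum_nonneg fun _ _ => sq_nonneg _

lemma sqDist_eq_zero_iff {x y : Fin P → ℝ} : sqDist x y = 0 ↔ x = y := by
  simp only [sqDist, sum_eq_zero_iff_of_nonneg fun _ _ => sq_nonneg _, mem_univ, true_imp_iff,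
    pow_eq_zero_iff two_ne_zero, sub_eq_zero, funext_iff]

lemma withinSS_nonneg (𝒮 : Finset (Finset (Fin J))) (x : Fin J → Fin P → ℝ) :
    0 ≤ withinSS 𝒮 x :=
  sum_nonneg fun _ _ => sum_nonneg fun _ _ => sqDist_nonneg _ _

lemma withinSS_eq_zero_iff {𝒮 : Finset (Finset (Fin J))} {x : Fin J → Fin P → ℝ} :
    withinSS 𝒮 x = 0 ↔ ∀ A ∈ 𝒮, ∀ j ∈ A, x j = clMean x A := by
  simp only [withinSS]
  rw [sum_eq_zero_iff_of_nonneg fun _ _ => sum_nonneg fun _ _ => sqDist_nonneg _ _]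
  simp only [sum_eq_zero_iff_of_nonneg fun _ _ => sqDist_nonneg _ _, sqDist_eq_zero_iff]

lemma continuous_withinSS (𝒮 : Finset (Finset (Fin J))) :
    Continuous fun x : Fin J → Fin P → ℝ => withinSS 𝒮 x := by
  simp only [withinSS, sqDist, clMean, Pi.smul_apply, Finset.sum_apply, smul_eq_mul]
  fun_prop

lemma clMean_eq_of_forall_eq {ι : Type*} {x : ι → Fin P → ℝ} {A : Finset ι} {v : Fin P → ℝ}
    (hA : A.Nonempty) (h : ∀ j ∈ A, x j = v) : clMean x A = v := by
  rw [clMean, sum_congr rfl h, sum_const, ← Nat.cast_smul_eq_nsmul ℝ, smul_smul,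
    inv_mul_cancel₀ (Nat.cast_ne_zero.2 hA.card_pos.ne'), one_smul]

def levelSets {α : Type*} [DecidableEq α] (x : Fin J → α) : Finset (Finset (Fin J)) :=
  univ.image fun j => univ.filter fun k => x k = x j

lemma withinSS_levelSets (x : Fin J → Fin P → ℝ) : withinSS (levelSets x) x = 0 := by
  refine withinSS_eq_zero_iff.2 fun A hA j hj => ?_
  obtain ⟨i, -, rfl⟩ := mem_image.1 hA
  rw [clMean_eq_of_forall_eq ⟨i, by simp⟩ fun k hk => (mem_filter.1 hk).2]
  exact (mem_filter.1 hj).2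

/-- `A ↦ x '' A` maps the cells of `𝒮` onto the singletons of the values of `x`; equal
cardinalities make it injective on `𝒮`, so distinct cells carry distinct values. -/
lemma IsPartition.eq_levelSets {α : Type*} [DecidableEq α] {𝒮 : Finset (Finset (Fin J))}
    (h𝒮 : IsPartition 𝒮) {x : Fin J → α} (hconst : ∀ A ∈ 𝒮, ∀ j ∈ A, ∀ k ∈ A, x j = x k)
    (hcard : 𝒮.card = (univ.image x).card) : 𝒮 = levelSets x := by
  have hval : ∀ A ∈ 𝒮, ∀ j ∈ A, A.image x = {x j} := fun A hA j hj =>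
    eq_singleton_iff_unique_mem.2
      ⟨mem_image_of_mem x hj, by simpa using fun k hk => hconst A hA k hk j hj⟩
  have hvalues : 𝒮.image (·.image x) = (univ.image x).image singleton := by
    ext B
    simp only [mem_image, mem_univ, true_and, exists_exists_eq_and]
    constructor
    · rintro ⟨A, hA, rfl⟩
      obtain ⟨j, hj⟩ := h𝒮.1 A hA
      exact ⟨j, (hval A hA j hj).symm⟩
    · rintro ⟨j, rfl⟩
      obtain ⟨A, ⟨hA, hj⟩, -⟩ := h𝒮.2 j
      exact ⟨A, hA, hval A hA j hj⟩
  have hinj : Set.InjOn (·.image x) (𝒮 : Set (Finset (Fin J))) :=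
    card_image_iff.1 <| by
      rw [hvalues, card_image_of_injective _ singleton_injective, hcard]
  have hcell : ∀ A ∈ 𝒮, ∀ j ∈ A, A = univ.filter fun k => x k = x j := by
    intro A hA j hj
    ext k
    simp only [mem_filter, mem_univ, true_and]
    refine ⟨fun hk => hconst A hA k hk j hj, fun hkj => ?_⟩
    obtain ⟨B, ⟨hB, hk⟩, -⟩ := h𝒮.2 k
    have : B = A := hinj hB hA (by simp only [hval B hB k hk, hval A hA j hj, hkj])
    exact this ▸ hk
  ext A
  simp only [levelSets, mem_image, mem_univ, true_and]
  constructor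
  · intro hA
    obtain ⟨j, hj⟩ := h𝒮.1 A hA
    exact ⟨j, (hcell A hA j hj).symm⟩
  · rintro ⟨j, rfl⟩
    obtain ⟨A, ⟨hA, hj⟩, -⟩ := h𝒮.2 j
    exact hcell A hA j hj ▸ hA

lemma withinSS_pos_of_ne_levelSets {𝒮 : Finset (Finset (Fin J))} (h𝒮 : IsPartition 𝒮)
    {x : Fin J → Fin P → ℝ} (hcard : 𝒮.card = (univ.image x).card) (hne : 𝒮 ≠ levelSets x) :
    0 < withinSS 𝒮 x := by
  refine (withinSS_nonneg 𝒮 x).lt_of_ne fun hzero => hne (h𝒮.eq_levelSets ?_ hcard)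
  intro A hA j hj k hk
  have hmean := withinSS_eq_zero_iff.1 hzero.symm A hA
  rw [hmean j hj, hmean k hk]

end Clustering

/-- **Uniqueness of the population clustering solution at `K = Q_fam`** (Section 3.1).
Let `β̂ⱼ →p βⱼ` and let `S₀` be the partition of `{1,…,J}` into the `Q_fam` level sets of
`j ↦ βⱼ`.  Then (i) the within-cluster sum of squares of `S₀` converges in probability to
`0`; (ii) for every other partition `S ≠ S₀` into `Q_fam` cells, it converges in
probability to a strictly positive constant; and consequently (iii) with probability
tending to one, `S₀` is the unique minimizer of the clustering objective among partitions
into `Q_fam` cells. -/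
theorem population_clustering_unique_minimizer
    {Ω : ℕ → Type*} [∀ n, MeasurableSpace (Ω n)]
    (μ : ∀ n, Measure (Ω n)) [∀ n, IsProbabilityMeasure (μ n)]
    {J P : ℕ}
    (βhat : ∀ n, Ω n → Fin J → Fin P → ℝ) (βlim : Fin J → Fin P → ℝ)
    (hconv : ∀ j, TendstoInProb μ (fun n ω => βhat n ω j) (βlim j))
    (S₀ : Finset (Finset (Fin J)))
    (hS₀ : S₀ = Finset.univ.image fun j => Finset.univ.filter fun k => βlim k = βlim j)
    (Qfam : ℕ) (hQfam : Qfam = (Finset.univ.image βlim).card) :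
    TendstoInProbR μ (fun n ω => withinSS S₀ (βhat n ω)) 0 ∧
    (∀ 𝒮 : Finset (Finset (Fin J)), IsPartition 𝒮 → 𝒮.card = Qfam → 𝒮 ≠ S₀ →
      ∃ c : ℝ, 0 < c ∧
        TendstoInProbR μ (fun n ω => withinSS 𝒮 (βhat n ω)) c) ∧
    Tendsto
      (fun n => μ n {ω | ∀ 𝒮 : Finset (Finset (Fin J)),
        IsPartition 𝒮 → 𝒮.card = Qfam → 𝒮 ≠ S₀ →
          withinSS S₀ (βhat n ω) < withinSS 𝒮 (βhat n ω)})
      atTop (nhds 1) := by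
  classical
  subst hS₀ hQfam
  have hlim : ∀ 𝒮 : Finset (Finset (Fin J)),
      TendstoInProbR μ (fun n ω => withinSS 𝒮 (βhat n ω)) (withinSS 𝒮 βlim) := fun 𝒮 =>
    tendstoInProbR_of_continuousAt hconv (continuous_withinSS 𝒮).continuousAt
  have hS₀lim : TendstoInProbR μ (fun n ω => withinSS (levelSets βlim) (βhat n ω)) 0 :=
    withinSS_levelSets βlim ▸ hlim _
  refine ⟨hS₀lim, fun 𝒮 h𝒮 hcard hne =>
    ⟨_, withinSS_pos_of_ne_levelSets h𝒮 hcard hne, hlim 𝒮⟩, ?_⟩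
  let competitors := univ.filter fun 𝒮 : Finset (Finset (Fin J)) =>
    IsPartition 𝒮 ∧ 𝒮.card = (univ.image βlim).card ∧ 𝒮 ≠ levelSets βlim
  have hwin : ∀ 𝒮 ∈ competitors, Tendsto (fun n => μ n {ω |
      ¬ withinSS (levelSets βlim) (βhat n ω) < withinSS 𝒮 (βhat n ω)}) atTop (𝓝 0) := by
    intro 𝒮 h𝒮
    obtain ⟨h𝒮, hcard, hne⟩ := (mem_filter.1 h𝒮).2
    simpa only [not_lt] using
      hS₀lim.tendsto_measure_le (hlim 𝒮) (withinSS_pos_of_ne_levelSets h𝒮 hcard hne)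
  convert tendsto_measure_forall_finset_one competitors hwin using 3 with n
  ext ω
  simp only [competitors, mem_filter, mem_univ, true_and, and_imp]
  rfl
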